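/- arXiv:math/0309450 — 6 statements merged into one kernel-verified Lean document; each statement's English description precedes it below -/
import Mathlib

section
/- Let l ≥ 0 be an integer, let c_0 = 0 and c_1, …, c_l ≥ 0 be reals, and for κ > 0 let η(κ) > 0 be the unique solution of ∏_{k=0}^{l}(c_k + η) = κ. Define μ(κ) = (l+1)·η(κ) − ∑_{k=0}^{l} c_k·log(c_k + η(κ)). Then μ is differentiable on (0,∞) and κ·μ′(κ) = η(κ), i.e. dμ/d(log κ) = η. -/
/-!
Write `F y = ∏ₖ (c k + y)`, so that `η` inverts `F` on `(0, ∞)`. Then `μ = G ∘ η` with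
`G y = ∑ₖ (y - c k · log (c k + y))`, and both derivatives are governed by the same sum
`S y = ∑ₖ (c k + y)⁻¹`: `F' = F · S` and `G' y = y · S`. Since `F` is strictly increasing, `η` is
continuous, so the inverse function theorem gives `η' κ = (κ · S (η κ))⁻¹`, and the chain rule
gives `μ' κ = η κ · S (η κ) / (κ · S (η κ)) = η κ / κ`.
-/

open Finset Set Filter Topology

theorem StrictMonoOn.continuousAt_of_rightInvOn {α β : Type*} [LinearOrder α]
    [TopologicalSpace α] [OrderTopology α] [LinearOrder β] [TopologicalSpace β] [OrderTopology β]
    [DenselyOrdered β] {f : β → α} {g : α → β} {s : Set β} {t : Set α} {a : α}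
    (hf : StrictMonoOn f s) (hfs : MapsTo f s t) (hgt : MapsTo g t s) (hfg : RightInvOn g f t)
    (ht : t ∈ 𝓝 a) (hs : s ∈ 𝓝 (g a)) : ContinuousAt g a := by
  have hg : StrictMonoOn g t := fun x hx y hy hxy =>
    (hf.lt_iff_lt (hgt hx) (hgt hy)).1 (by rwa [hfg hx, hfg hy])
  have hsurj : s ⊆ g '' t := fun y hy =>
    ⟨f y, hfs hy, hf.injOn (hgt (hfs hy)) hy (hfg (hfs hy))⟩
  exact hg.continuousAt_of_image_mem_nhds ht (mem_of_superset hs hsurj)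

section ShiftedProduct

variable {ι : Type*} {s : Finset ι} {c : ι → ℝ}

theorem strictMonoOn_prod_add (hs : s.Nonempty) (hc : ∀ k ∈ s, 0 ≤ c k) :
    StrictMonoOn (fun y => ∏ k ∈ s, (c k + y)) (Ioi 0) := by
  intro a (ha : 0 < a) b _ hab
  exact prod_lt_prod_of_nonempty (fun k hk => by linarith [hc k hk])
    (fun k _ => by linarith) hs

theorem hasDerivAt_prod_add {y : ℝ} (hy : ∀ k ∈ s, c k + y ≠ 0) :
    HasDerivAt (fun y => ∏ k ∈ s, (c k + y))
      ((∏ k ∈ s, (c k + y)) * ∑ k ∈ s, (c k + y)⁻¹) y := by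
  classical
  have h := HasDerivAt.fun_finsetProd (u := s) (fun k _ => (hasDerivAt_id y).const_add (c k))
  refine h.congr_deriv ?_
  rw [mul_sum]
  refine sum_congr rfl fun k hk => ?_
  rw [← mul_prod_erase s (fun k => c k + y) hk]
  field_simp [hy k hk]
  simp

theorem hasDerivAt_sub_mul_log_add (a : ℝ) {y : ℝ} (hy : a + y ≠ 0) :
    HasDerivAt (fun y => y - a * Real.log (a + y)) (y * (a + y)⁻¹) y := by
  refine ((hasDerivAt_id' y).sub
    ((((hasDerivAt_id' y).const_add a).log hy).const_mul a)).congr_deriv ?_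
  field_simp
  ring

theorem hasDerivAt_sum_sub_mul_log_add {y : ℝ} (hy : ∀ k ∈ s, c k + y ≠ 0) :
    HasDerivAt (fun y => ∑ k ∈ s, (y - c k * Real.log (c k + y)))
      (y * ∑ k ∈ s, (c k + y)⁻¹) y := by
  rw [mul_sum]
  exact HasDerivAt.fun_sum fun k hk => hasDerivAt_sub_mul_log_add (c k) (hy k hk)

theorem hasDerivAt_potential_comp_inverse (hs : s.Nonempty) (hc : ∀ k ∈ s, 0 ≤ c k)
    {η : ℝ → ℝ} (hη : ∀ κ, 0 < κ → 0 < η κ ∧ ∏ k ∈ s, (c k + η κ) = κ) {κ : ℝ} (hκ : 0 < κ) :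
    HasDerivAt (fun t => ∑ k ∈ s, (η t - c k * Real.log (c k + η t))) (η κ / κ) κ := by
  obtain ⟨hηκ, hFηκ⟩ := hη κ hκ
  have hfac : ∀ k ∈ s, c k + η κ ≠ 0 := fun k hk => by linarith [hc k hk]
  have hS : 0 < ∑ k ∈ s, (c k + η κ)⁻¹ :=
    sum_pos (fun k hk => inv_pos.2 (by linarith [hc k hk])) hs
  have hcont : ContinuousAt η κ :=
    (strictMonoOn_prod_add hs hc).continuousAt_of_rightInvOn
      (fun y (hy : 0 < y) => prod_pos fun k hk => by linarith [hc k hk])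
      (fun x hx => (hη x hx).1) (fun x hx => (hη x hx).2) (Ioi_mem_nhds hκ) (Ioi_mem_nhds hηκ)
  have hF := hasDerivAt_prod_add hfac
  rw [hFηκ] at hF
  have hηd : HasDerivAt η (κ * ∑ k ∈ s, (c k + η κ)⁻¹)⁻¹ κ :=
    hF.of_local_left_inverse hcont (by positivity)
      (eventually_of_mem (Ioi_mem_nhds hκ) fun x hx => (hη x hx).2)
  refine ((hasDerivAt_sum_sub_mul_log_add hfac).comp κ hηd).congr_deriv ?_
  rw [← div_eq_mul_inv, mul_div_mul_right _ _ hS.ne']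

end ShiftedProduct

theorem stmt_2_general (l : ℕ) (c : ℕ → ℝ) (hc : ∀ k ≤ l, 0 ≤ c k)
    (η : ℝ → ℝ)
    (hη : ∀ κ : ℝ, 0 < κ →
      0 < η κ ∧ ∏ k ∈ Finset.range (l + 1), (c k + η κ) = κ) :
    ∀ κ : ℝ, 0 < κ →
      HasDerivAt
        (fun t => (l + 1 : ℝ) * η t -
          ∑ k ∈ Finset.range (l + 1), c k * Real.log (c k + η t))
        (η κ / κ) κ := by
  intro κ hκ
  have hμ : (fun t => (l + 1 : ℝ) * η t -
      ∑ k ∈ range (l + 1), c k * Real.log (c k + η t)) =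
      fun t => ∑ k ∈ range (l + 1), (η t - c k * Real.log (c k + η t)) := by
    ext t
    simp [sum_sub_distrib]
  rw [hμ]
  exact hasDerivAt_potential_comp_inverse nonempty_range_add_one
    (fun k hk => hc k (Nat.lt_succ_iff.1 (mem_range.1 hk))) hη hκ

/-- With `c 0 = 0 ≤ c 1, …, c l` and `η : ℝ → ℝ` the solution of
`∏_{k=0}^{l}(c k + η κ) = κ` for `κ > 0`, the potential
`μ κ = (l+1)·η κ − ∑_{k=0}^{l} c k · log (c k + η κ)` is differentiable on `(0,∞)`
with `κ · μ'(κ) = η κ`, i.e. `dμ/d(log κ) = η`. -/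
theorem stmt_2 (l : ℕ) (c : ℕ → ℝ) (hc0 : c 0 = 0) (hc : ∀ k ≤ l, 0 ≤ c k)
    (η : ℝ → ℝ)
    (hη : ∀ κ : ℝ, 0 < κ →
      0 < η κ ∧ ∏ k ∈ Finset.range (l + 1), (c k + η κ) = κ) :
    ∀ κ : ℝ, 0 < κ →
      HasDerivAt
        (fun t => (l + 1 : ℝ) * η t -
          ∑ k ∈ Finset.range (l + 1), c k * Real.log (c k + η t))
        (η κ / κ) κ :=
  stmt_2_general l c hc η hη
end

section
/- Let l ≥ 1 be an integer and fix κ > 0. For c = (c_1, …, c_l) ∈ [0,∞)^l, let η(c) > 0 be the unique positive solution of η·∏_{k=1}^{l}(c_k + η) = κ (i.e. ∏_{k=0}^{l}(c_k + η) = κ with c_0 = 0), and define μ(c) = (l+1)·η(c) − ∑_{k=0}^{l} c_k·log(c_k + η(c)). Then μ is differentiable in c and for every k ∈ {1, …, l}: ∂μ/∂c_k = − log(c_k + η(c)) − 1. In particular, ∂μ/∂c_k equals − log(c_k + η) up to the additive constant −1. -/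
/-!
Take the logarithm `F (x, y) = log y + ∑ j, log (x j + y)` of the defining equation. It is
strictly increasing in `y > 0`, so the implicit function theorem yields a local solution that
must coincide with `η`; differentiating `F (x, η x) = log κ` in a direction `v` gives
`η' v / η + ∑ j, (v j + η' v) / (c j + η) = 0`. Since `c j / (c j + η) = 1 - η / (c j + η)`,
this relation makes every `η'`-term in `dμ` cancel, leaving `dμ v = -∑ j, v j * (log (c j + η) + 1)`.
-/

open Real Filter Topology ContinuousLinearMap

lemma ContinuousLinearMap.isInvertible_of_apply_one_ne_zero {𝕜 : Type*} [Field 𝕜]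
    [TopologicalSpace 𝕜] [IsTopologicalRing 𝕜] {g : 𝕜 →L[𝕜] 𝕜} (h : g 1 ≠ 0) :
    g.IsInvertible :=
  IsInvertible.of_inverse (g := (g 1)⁻¹ • .id 𝕜 𝕜) (by ext; simp [h]) (by ext; simp [h])

/-- `-(f ∘L inr).inverse ∘L (f ∘L inl)` is the derivative of an implicit function, see
`HasStrictFDerivAt.hasStrictFDerivAt_implicitFunctionOfProdDomain`. -/
lemma ContinuousLinearMap.map_prodMk_neg_inverse_comp_inr_comp_inl {R E₁ E₂ F : Type*}
    [Ring R] [TopologicalSpace E₁] [AddCommGroup E₁] [Module R E₁]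
    [TopologicalSpace E₂] [AddCommGroup E₂] [Module R E₂] [IsTopologicalAddGroup E₂]
    [TopologicalSpace F] [AddCommGroup F] [Module R F]
    {f : E₁ × E₂ →L[R] F} (hf : (f ∘L inr R E₁ E₂).IsInvertible) (v : E₁) :
    f (v, (-(f ∘L inr R E₁ E₂).inverse ∘L (f ∘L inl R E₁ E₂)) v) = 0 := by
  rw [← f.comp_inl_add_comp_inr]
  simp only [comp_apply, inl_apply, neg_apply, map_neg, hf.self_apply_inverse, add_neg_cancel]

variable {ι : Type*} [Fintype ι]

noncomputable def logShiftedProd (p : (ι → ℝ) × ℝ) : ℝ :=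
  log p.2 + ∑ j, log (p.1 j + p.2)

lemma logShiftedProd_eq_log_mul_prod {x : ι → ℝ} {y : ℝ} (hx : ∀ j, 0 ≤ x j) (hy : 0 < y) :
    logShiftedProd (x, y) = log (y * ∏ j, (x j + y)) := by
  have hxy : ∀ j, x j + y ≠ 0 := fun j => by linarith [hx j]
  rw [log_mul hy.ne' (Finset.prod_ne_zero_iff.2 fun j _ => hxy j), log_prod fun j _ => hxy j]
  rfl

lemma strictMonoOn_logShiftedProd {x : ι → ℝ} (hx : ∀ j, 0 ≤ x j) :
    StrictMonoOn (fun y => logShiftedProd (x, y)) (Set.Ioi 0) := by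
  intro a ha b _ hab
  exact add_lt_add_of_lt_of_le (log_lt_log ha hab)
    (Finset.sum_le_sum fun j _ => log_le_log (by linarith [hx j, ha.out]) (by linarith))

lemma hasStrictFDerivAt_logShiftedProd {x : ι → ℝ} {y : ℝ} (hy : y ≠ 0)
    (hxy : ∀ j, x j + y ≠ 0) :
    ∃ L : (ι → ℝ) × ℝ →L[ℝ] ℝ, HasStrictFDerivAt logShiftedProd L (x, y) ∧
      ∀ v w, L (v, w) = w / y + ∑ j, (v j + w) / (x j + y) := by
  refine ⟨y⁻¹ • snd ℝ (ι → ℝ) ℝ +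
    ∑ j, (x j + y)⁻¹ • (proj j ∘L fst ℝ (ι → ℝ) ℝ + snd ℝ (ι → ℝ) ℝ), ?_, fun v w => ?_⟩
  · unfold logShiftedProd
    exact (hasStrictFDerivAt_snd.log hy).fun_add <| .fun_sum fun j _ =>
      (((hasStrictFDerivAt_apply j x).comp (x, y) hasStrictFDerivAt_fst).fun_add
        hasStrictFDerivAt_snd).log (hxy j)
  · simp [div_eq_inv_mul, mul_add]

theorem exists_hasFDerivWithinAt_of_mul_prod_add_eq {κ : ℝ} {η : (ι → ℝ) → ℝ}
    (hη : ∀ x : ι → ℝ, (∀ k, 0 ≤ x k) → 0 < η x ∧ η x * ∏ k, (x k + η x) = κ)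
    {c : ι → ℝ} (hc : ∀ k, 0 ≤ c k) :
    ∃ η' : (ι → ℝ) →L[ℝ] ℝ, HasFDerivWithinAt η η' {x | ∀ k, 0 ≤ x k} c ∧
      ∀ v, η' v / η c + ∑ j, (v j + η' v) / (c j + η c) = 0 := by
  obtain ⟨he, hκ⟩ := hη c hc
  have hce : ∀ j, 0 < c j + η c := fun j => add_pos_of_nonneg_of_pos (hc j) he
  obtain ⟨L, hF, hL⟩ := hasStrictFDerivAt_logShiftedProd he.ne' fun j => (hce j).ne'
  have hinv : (L ∘L inr ℝ (ι → ℝ) ℝ).IsInvertible := by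
    refine isInvertible_of_apply_one_ne_zero (ne_of_gt ?_)
    rw [comp_apply, inr_apply, hL]
    simp only [Pi.zero_apply, zero_add]
    exact add_pos_of_pos_of_nonneg (one_div_pos.2 he)
      (Finset.sum_nonneg fun j _ => (one_div_pos.2 (hce j)).le)
  set ψ := hF.implicitFunctionOfProdDomain hinv
  have hψc : ψ c = η c :=
    (hF.eventually_apply_eq_iff_implicitFunctionOfProdDomain hinv).self_of_nhds.mp rfl
  have hroot : ∀ᶠ x in 𝓝 c, logShiftedProd (x, ψ x) = logShiftedProd (c, η c) :=
    hF.eventually_apply_implicitFunctionOfProdDomain hinv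
  have hψpos : ∀ᶠ x in 𝓝 c, 0 < ψ x :=
    (hF.tendsto_implicitFunctionOfProdDomain hinv).eventually (lt_mem_nhds he)
  have hηψ : η =ᶠ[𝓝[{x | ∀ k, 0 ≤ x k}] c] ψ := by
    filter_upwards [self_mem_nhdsWithin, nhdsWithin_le_nhds hroot, nhdsWithin_le_nhds hψpos]
      with x hx hxroot hxpos
    obtain ⟨hηx, hηxκ⟩ := hη x hx
    refine (strictMonoOn_logShiftedProd hx).injOn hηx hxpos ?_
    rw [hxroot, logShiftedProd_eq_log_mul_prod hx hηx, logShiftedProd_eq_log_mul_prod hc he,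
      hηxκ, hκ]
  refine ⟨_, (hF.hasStrictFDerivAt_implicitFunctionOfProdDomain hinv).hasFDerivAt
    |>.hasFDerivWithinAt.congr_of_eventuallyEq hηψ hψc.symm, fun v => ?_⟩
  rw [← hL]
  exact L.map_prodMk_neg_inverse_comp_inr_comp_inl hinv v

lemma hasFDerivWithinAt_potential {η : (ι → ℝ) → ℝ} {η' : (ι → ℝ) →L[ℝ] ℝ}
    {s : Set (ι → ℝ)} {c : ι → ℝ} (hη : HasFDerivWithinAt η η' s c) (he : η c ≠ 0)
    (hce : ∀ j, c j + η c ≠ 0)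
    (hrel : ∀ v, η' v / η c + ∑ j, (v j + η' v) / (c j + η c) = 0) :
    HasFDerivWithinAt (fun x => (Fintype.card ι + 1 : ℝ) * η x - ∑ j, x j * log (x j + η x))
      (-∑ j, (log (c j + η c) + 1) • (proj j : (ι → ℝ) →L[ℝ] ℝ)) s c := by
  have hcoord : ∀ j, HasFDerivWithinAt (fun x : ι → ℝ => x j) (proj j : (ι → ℝ) →L[ℝ] ℝ) s c :=
    fun j => (hasFDerivAt_apply j c).hasFDerivWithinAt
  refine ((hη.const_mul _).fun_sub (.fun_sum fun j _ =>
    (hcoord j).mul (((hcoord j).fun_add hη).log (hce j)))).congr_fderiv ?_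
  ext1 v
  set e := η c
  set w := η' v
  have hweights : ∑ j, c j * ((c j + e)⁻¹ * (v j + w)) = ∑ j, v j + Fintype.card ι * w + w := by
    have hterm : ∀ j, c j * ((c j + e)⁻¹ * (v j + w)) = (v j + w) - e * ((v j + w) / (c j + e)) :=
      fun j => by field_simp [hce j]; ring
    have hrelv := hrel v
    rw [Finset.sum_congr rfl fun j _ => hterm j, Finset.sum_sub_distrib, ← Finset.mul_sum,
      Finset.sum_add_distrib, Finset.sum_const, Finset.card_univ, nsmul_eq_mul]
    field_simp at hrelv
    linarith
  simp only [sub_apply, smul_apply, FunLike.coe_sum, Finset.sum_apply, add_apply, neg_apply,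
    proj_apply, smul_eq_mul]
  rw [Finset.sum_add_distrib, hweights]
  simp only [add_mul, one_mul, Finset.sum_add_distrib]
  ring

theorem stmt_5_general (l : ℕ) (κ : ℝ)
    (η : (Fin l → ℝ) → ℝ)
    (hη : ∀ c : Fin l → ℝ, (∀ k, 0 ≤ c k) →
      0 < η c ∧ η c * ∏ k, (c k + η c) = κ) :
    ∀ c : Fin l → ℝ, (∀ k, 0 ≤ c k) →
      ∃ D : (Fin l → ℝ) →L[ℝ] ℝ,
        HasFDerivWithinAt
          (fun x : Fin l → ℝ =>
            (l + 1 : ℝ) * η x - ∑ k, x k * Real.log (x k + η x))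
          D {x : Fin l → ℝ | ∀ k, 0 ≤ x k} c ∧
        ∀ k : Fin l, D (Pi.single k 1) = -Real.log (c k + η c) - 1 := by
  intro c hc
  obtain ⟨η', hη', hrel⟩ := exists_hasFDerivWithinAt_of_mul_prod_add_eq hη hc
  have he := (hη c hc).1
  have hpot := hasFDerivWithinAt_potential hη' he.ne'
    (fun j => (add_pos_of_nonneg_of_pos (hc j) he).ne') hrel
  rw [Fintype.card_fin] at hpot
  refine ⟨_, hpot, fun k => ?_⟩
  simp only [neg_apply, sum_apply, smul_apply, proj_apply, Pi.single_apply, smul_eq_mul, mul_ite,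
    mul_one, mul_zero, Finset.sum_ite_eq', Finset.mem_univ, ↓reduceIte]
  ring

/-- Fix `κ > 0` and `l ≥ 1`. For `c ∈ [0,∞)^l` let `η c > 0` solve
`η c · ∏_{k=1}^{l}(c k + η c) = κ` (i.e. `∏_{k=0}^{l}(c k + η) = κ` with `c_0 = 0`),
and set `μ c = (l+1)·η c − ∑_{k=0}^{l} c k · log(c k + η c)` (the `k = 0` term
vanishes since `c_0 = 0`). Then `μ` is differentiable in `c` on `[0,∞)^l` and
`∂μ/∂c_k = −log(c k + η c) − 1`. -/
theorem stmt_5 (l : ℕ) (hl : 1 ≤ l) (κ : ℝ) (hκ : 0 < κ)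
    (η : (Fin l → ℝ) → ℝ)
    (hη : ∀ c : Fin l → ℝ, (∀ k, 0 ≤ c k) →
      0 < η c ∧ η c * ∏ k, (c k + η c) = κ) :
    ∀ c : Fin l → ℝ, (∀ k, 0 ≤ c k) →
      ∃ D : (Fin l → ℝ) →L[ℝ] ℝ,
        HasFDerivWithinAt
          (fun x : Fin l → ℝ =>
            (l + 1 : ℝ) * η x - ∑ k, x k * Real.log (x k + η x))
          D {x : Fin l → ℝ | ∀ k, 0 ≤ x k} c ∧
        ∀ k : Fin l, D (Pi.single k 1) = -Real.log (c k + η c) - 1 :=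
  stmt_5_general l κ η hη
end

section
/- (Lemma 3.3) Let n ≥ 1, let z_0, z_1, …, z_n be complex numbers with 0 < |z_0| ≤ |z_i| ≤ 1 for all i ∈ {1, …, n}, let I, J ⊆ {1, …, n}, and let K, c > 0. Let G = (g_{ij}) be an n×n complex matrix such that |g_{ij}| ≤ K·(δ_{ij} + |z_i||z_j|) whenever (i,j) ∉ I×J, and |g_{ij}| ≤ K·(δ_{ij} + |z_i||z_j| + |z_0|^2/(|z_i||z_j|)) whenever (i,j) ∈ I×J. If |det G| ≥ c, then G is invertible and there exists a constant C depending only on n, K, c (and not on z_0, …, z_n, I, J) such that |(G^{-1})_{ij}| ≤ C·(δ_{ij} + |z_i||z_j|) whenever (i,j) ∉ I×J, and |(G^{-1})_{ij}| ≤ C·(δ_{ij} + |z_i||z_j| + |z_0|^2/(|z_i||z_j|)) whenever (i,j) ∈ I×J. -/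
open Function Matrix

lemma det_norm_le {m : ℕ} (A : Matrix (Fin m) (Fin m) ℂ) (B : ℝ) (hB : 0 ≤ B)
    (h : ∀ p q, ‖A p q‖ ≤ B) : ‖A.det‖ ≤ m.factorial * B ^ m := by
  rw [Matrix.det_apply]
  calc ‖∑ σ : Equiv.Perm (Fin m), Equiv.Perm.sign σ • ∏ i, A (σ i) i‖
      ≤ ∑ σ : Equiv.Perm (Fin m), ‖Equiv.Perm.sign σ • ∏ i, A (σ i) i‖ := norm_sum_le _ _
    _ ≤ ∑ _σ : Equiv.Perm (Fin m), B ^ m := by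
        refine Finset.sum_le_sum fun σ _ => ?_
        have h1 : ‖Equiv.Perm.sign σ • ∏ i, A (σ i) i‖ = ‖∏ i, A (σ i) i‖ := by
          rcases Int.units_eq_one_or (Equiv.Perm.sign σ) with hs | hs <;> simp [hs]
        rw [h1, norm_prod]
        calc ∏ i, ‖A (σ i) i‖ ≤ ∏ _i : Fin m, B :=
              Finset.prod_le_prod (fun i _ => norm_nonneg _) (fun i _ => h _ _)
          _ = B ^ m := by simp
    _ = m.factorial * B ^ m := by
        rw [Finset.sum_const, Finset.card_univ, Fintype.card_perm, Fintype.card_fin,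
          nsmul_eq_mul]


noncomputable def Tb (a : ℝ) {n : ℕ} (w : Fin n → ℝ) (I J : Finset (Fin n)) (i j : Fin n) : ℝ :=
  w i * w j + (if i ∈ I ∧ j ∈ J then a ^ 2 / (w i * w j) else 0)

noncomputable def Lp (K : ℝ) : ℕ → ℝ
  | 0 => K
  | m + 1 => K * ((m + 1).factorial * (3 * K) ^ (m + 1)) + 3 * (m + 1) * K * Lp K m

lemma Lp_pos {K : ℝ} (hK : 0 < K) : ∀ m, 0 < Lp K m
  | 0 => hK
  | m + 1 => by
      have := Lp_pos hK m
      have h1 : (0:ℝ) < (m + 1).factorial * (3 * K) ^ (m + 1) := by positivity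
      have h2 : (0:ℝ) < 3 * (m + 1 : ℝ) * K := by positivity
      simp only [Lp]
      nlinarith

section
variable {n : ℕ} (a : ℝ) (w : Fin n → ℝ) (I J : Finset (Fin n))
variable (ha : 0 < a) (hw1 : ∀ i, a ≤ w i) (hw2 : ∀ i, w i ≤ 1)

include ha hw1 in
lemma w_pos (i : Fin n) : 0 < w i := lt_of_lt_of_le ha (hw1 i)

include ha hw1 in
lemma Tb_pos (i j : Fin n) : 0 < Tb a w I J i j := by
  have hi := w_pos a w ha hw1 i
  have hj := w_pos a w ha hw1 j
  have : (0:ℝ) ≤ (if i ∈ I ∧ j ∈ J then a ^ 2 / (w i * w j) else 0) := by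
    split <;> positivity
  unfold Tb; nlinarith

include ha hw1 hw2 in
lemma Tb_le_two (i j : Fin n) : Tb a w I J i j ≤ 2 := by
  have hi := w_pos a w ha hw1 i
  have hj := w_pos a w ha hw1 j
  have h1 : w i * w j ≤ 1 := by nlinarith [hw2 i, hw2 j]
  have h2 : (if i ∈ I ∧ j ∈ J then a ^ 2 / (w i * w j) else 0) ≤ 1 := by
    split
    · rw [div_le_one (by positivity)]
      nlinarith [hw1 i, hw1 j]
    · norm_num
  unfold Tb; linarith

include ha hw1 hw2 in
lemma Tb_mul (i l j : Fin n) :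
    Tb a w I J i l * Tb a w I J l j ≤ 3 * Tb a w I J i j := by
  have hi := w_pos a w ha hw1 i
  have hl := w_pos a w ha hw1 l
  have hj := w_pos a w ha hw1 j
  have hij : 0 ≤ (if i ∈ I ∧ j ∈ J then a ^ 2 / (w i * w j) else 0) := by
    split <;> positivity
  have hl1 : w l * w l ≤ 1 := by nlinarith [hw2 l]
  have h00 : 0 < w i * w j := mul_pos hi hj
  have t1 : w i * w l * (w l * w j) ≤ w i * w j := by
    calc w i * w l * (w l * w j) = w i * w j * (w l * w l) := by ring
      _ ≤ w i * w j * 1 := mul_le_mul_of_nonneg_left hl1 (by positivity)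
      _ = w i * w j := mul_one _
  have t2 : w i * w l * (a ^ 2 / (w l * w j)) ≤ w i * w j := by
    rw [mul_div_assoc', div_le_iff₀ (by positivity)]
    calc w i * w l * a ^ 2 ≤ w i * w l * (w j * w j) :=
          mul_le_mul_of_nonneg_left (by nlinarith [hw1 j]) (by positivity)
      _ = w i * w j * (w l * w j) := by ring
  have t3 : a ^ 2 / (w i * w l) * (w l * w j) ≤ w i * w j := by
    rw [div_mul_eq_mul_div, div_le_iff₀ (by positivity)]
    calc a ^ 2 * (w l * w j) ≤ w i * w i * (w l * w j) :=
          mul_le_mul_of_nonneg_right (by nlinarith [hw1 i]) (by positivity)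
      _ = w i * w j * (w i * w l) := by ring
  have t4 : a ^ 2 / (w i * w l) * (a ^ 2 / (w l * w j)) ≤ a ^ 2 / (w i * w j) := by
    rw [div_mul_div_comm, div_le_div_iff₀ (by positivity) (by positivity)]
    calc a ^ 2 * a ^ 2 * (w i * w j) ≤ (w l * w l) * a ^ 2 * (w i * w j) := by
          apply mul_le_mul_of_nonneg_right
            (mul_le_mul_of_nonneg_right (by nlinarith [hw1 l]) (by positivity)) (by positivity)
      _ = a ^ 2 * (w i * w l * (w l * w j)) := by ring
  unfold Tb
  by_cases h1 : i ∈ I ∧ l ∈ J <;> by_cases h2 : l ∈ I ∧ j ∈ J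
  · rw [if_pos h1, if_pos h2, if_pos ⟨h1.1, h2.2⟩]
    have h0 : (0:ℝ) ≤ a ^ 2 / (w i * w j) := by positivity
    calc (w i * w l + a ^ 2 / (w i * w l)) * (w l * w j + a ^ 2 / (w l * w j))
        = w i * w l * (w l * w j) + w i * w l * (a ^ 2 / (w l * w j)) +
          a ^ 2 / (w i * w l) * (w l * w j) +
          a ^ 2 / (w i * w l) * (a ^ 2 / (w l * w j)) := by ring
      _ ≤ 3 * (w i * w j + a ^ 2 / (w i * w j)) := by linarith
  · rw [if_pos h1, if_neg h2, add_zero]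
    calc (w i * w l + a ^ 2 / (w i * w l)) * (w l * w j)
        = w i * w l * (w l * w j) + a ^ 2 / (w i * w l) * (w l * w j) := by ring
      _ ≤ 3 * (w i * w j + if i ∈ I ∧ j ∈ J then a ^ 2 / (w i * w j) else 0) := by linarith
  · rw [if_neg h1, if_pos h2, add_zero]
    calc (w i * w l) * (w l * w j + a ^ 2 / (w l * w j))
        = w i * w l * (w l * w j) + w i * w l * (a ^ 2 / (w l * w j)) := by ring
      _ ≤ 3 * (w i * w j + if i ∈ I ∧ j ∈ J then a ^ 2 / (w i * w j) else 0) := by linarith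
  · rw [if_neg h1, if_neg h2, add_zero, add_zero]
    have : (w i * w l) * (w l * w j) ≤ w i * w j := t1
    linarith
end

lemma range_comp_succAbove {n m : ℕ} (f : Fin (m + 1) → Fin n) (hf : Injective f)
    (p : Fin (m + 1)) : Set.range (f ∘ p.succAbove) = Set.range f \ {f p} := by
  rw [Set.range_comp, Fin.range_succAbove]
  ext k
  simp only [Set.mem_image, Set.mem_compl_iff, Set.mem_singleton_iff, Set.mem_diff,
    Set.mem_range]
  constructor
  · rintro ⟨x, hx, rfl⟩
    exact ⟨⟨x, rfl⟩, fun h => hx (hf h)⟩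
  · rintro ⟨⟨x, rfl⟩, hne⟩
    exact ⟨x, fun h => hne (by rw [h]), rfl⟩

lemma minor_bound {n : ℕ} (a : ℝ) (w : Fin n → ℝ) (I J : Finset (Fin n)) (K : ℝ)
    (G : Matrix (Fin n) (Fin n) ℂ)
    (ha : 0 < a) (hw1 : ∀ i, a ≤ w i) (hw2 : ∀ i, w i ≤ 1) (hK : 0 < K)
    (hG : ∀ p q, p ≠ q → ‖G p q‖ ≤ K * Tb a w I J p q)
    (hG3 : ∀ p q, ‖G p q‖ ≤ 3 * K) :
    ∀ (m : ℕ) (r c : Fin (m + 1) → Fin n) (i j : Fin n), Injective r → Injective c →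
      i ≠ j → i ∉ Set.range c → j ∈ Set.range c →
      Set.range r = insert i (Set.range c \ {j}) →
      ‖(G.submatrix r c).det‖ ≤ Lp K m * Tb a w I J i j := by
  intro m
  induction m with
  | zero =>
    intro r c i j hr hc hij h1 h2 h3
    obtain ⟨t, ht⟩ := h2
    have hc0 : c 0 = j := by rw [Subsingleton.elim (0 : Fin 1) t, ht]
    have hr0 : r 0 = i := by
      have hi : i ∈ Set.range r := by rw [h3]; exact Set.mem_insert _ _
      obtain ⟨s, hs⟩ := hi
      rw [Subsingleton.elim (0 : Fin 1) s, hs]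
    rw [Matrix.det_fin_one]
    simp only [Matrix.submatrix_apply, hr0, hc0]
    simpa [Lp] using hG i j hij
  | succ m IH =>
    intro r c i j hr hc hij h1 h2 h3
    have hir : i ∈ Set.range r := by rw [h3]; exact Set.mem_insert _ _
    obtain ⟨ai, hai⟩ := hir
    obtain ⟨b0, hb0⟩ := h2
    have hT := Tb_pos a w I J ha hw1 i j
    set X : ℝ := K * ((m + 1).factorial * (3 * K) ^ (m + 1)) with hX
    set Y : ℝ := 3 * K * Lp K m with hY
    rw [Matrix.det_succ_row _ ai]
    refine le_trans (norm_sum_le _ _) ?_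
    have hterm : ∀ b : Fin (m + 2),
        ‖(-1 : ℂ) ^ ((ai : ℕ) + (b : ℕ)) * (G.submatrix r c) ai b *
          ((G.submatrix r c).submatrix ai.succAbove b.succAbove).det‖
        = ‖G i (c b)‖ * ‖(G.submatrix (r ∘ ai.succAbove) (c ∘ b.succAbove)).det‖ := by
      intro b
      rw [Matrix.submatrix_submatrix, norm_mul, norm_mul, norm_pow, norm_neg, norm_one,
        one_pow, one_mul, Matrix.submatrix_apply, hai]
    have key0 : ‖G i (c b0)‖ * ‖(G.submatrix (r ∘ ai.succAbove) (c ∘ b0.succAbove)).det‖ ≤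
        X * Tb a w I J i j := by
      have hicb : i ≠ c b0 := fun h => h1 ⟨b0, h.symm⟩
      have hGe : ‖G i (c b0)‖ ≤ K * Tb a w I J i j := by
        rw [hb0] at hicb ⊢; exact hG _ _ hicb
      have hdet : ‖(G.submatrix (r ∘ ai.succAbove) (c ∘ b0.succAbove)).det‖ ≤
          (m + 1).factorial * (3 * K) ^ (m + 1) :=
        det_norm_le _ _ (by positivity) (fun p q => hG3 _ _)
      calc ‖G i (c b0)‖ * ‖(G.submatrix (r ∘ ai.succAbove) (c ∘ b0.succAbove)).det‖
          ≤ (K * Tb a w I J i j) * ((m + 1).factorial * (3 * K) ^ (m + 1)) :=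
            mul_le_mul hGe hdet (norm_nonneg _)
              (mul_nonneg hK.le (Tb_pos a w I J ha hw1 i j).le)
        _ = X * Tb a w I J i j := by rw [hX]; ring
    have key1 : ∀ b : Fin (m + 2), b ≠ b0 →
        ‖G i (c b)‖ * ‖(G.submatrix (r ∘ ai.succAbove) (c ∘ b.succAbove)).det‖ ≤
        Y * Tb a w I J i j := by
      intro b hb
      have hicb : i ≠ c b := fun h => h1 ⟨b, h.symm⟩
      have hGe : ‖G i (c b)‖ ≤ K * Tb a w I J i (c b) := hG _ _ hicb
      have hlj : c b ≠ j := fun h => hb (hc (h.trans hb0.symm))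
      have hlc : c b ∈ Set.range c := ⟨b, rfl⟩
      have hrc' : Set.range (r ∘ ai.succAbove) = Set.range r \ {i} := by
        rw [range_comp_succAbove r hr, hai]
      have hcc' : Set.range (c ∘ b.succAbove) = Set.range c \ {c b} :=
        range_comp_succAbove c hc b
      have hinj_r : Injective (r ∘ ai.succAbove) := hr.comp Fin.succAbove_right_injective
      have hinj_c : Injective (c ∘ b.succAbove) := hc.comp Fin.succAbove_right_injective
      have hrange_r' : Set.range (r ∘ ai.succAbove) = Set.range c \ {j} := by
        rw [hrc', h3, Set.insert_diff_self_of_notMem]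
        intro hmem
        exact h1 hmem.1
      have hIH := IH (r ∘ ai.succAbove) (c ∘ b.succAbove) (c b) j hinj_r hinj_c hlj
        (by rw [hcc']; simp)
        (by rw [hcc']; exact ⟨⟨b0, hb0⟩, by simp [Ne.symm hlj]⟩)
        (by
          rw [hrange_r', hcc']
          ext x
          by_cases hx : x = c b <;> simp [hx, hlj, hlc] <;> tauto)
      calc ‖G i (c b)‖ * ‖(G.submatrix (r ∘ ai.succAbove) (c ∘ b.succAbove)).det‖
          ≤ (K * Tb a w I J i (c b)) * (Lp K m * Tb a w I J (c b) j) :=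
            mul_le_mul hGe hIH (norm_nonneg _)
              (mul_nonneg hK.le (Tb_pos a w I J ha hw1 i (c b)).le)
        _ = (K * Lp K m) * (Tb a w I J i (c b) * Tb a w I J (c b) j) := by ring
        _ ≤ (K * Lp K m) * (3 * Tb a w I J i j) :=
            mul_le_mul_of_nonneg_left (Tb_mul a w I J ha hw1 hw2 i (c b) j)
              (mul_nonneg hK.le (Lp_pos hK m).le)
        _ = Y * Tb a w I J i j := by rw [hY]; ring
    calc ∑ b : Fin (m + 2), ‖(-1 : ℂ) ^ ((ai : ℕ) + (b : ℕ)) * (G.submatrix r c) ai b *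
          ((G.submatrix r c).submatrix ai.succAbove b.succAbove).det‖
        = ∑ b : Fin (m + 2),
            ‖G i (c b)‖ * ‖(G.submatrix (r ∘ ai.succAbove) (c ∘ b.succAbove)).det‖ :=
          Finset.sum_congr rfl fun b _ => hterm b
      _ = ‖G i (c b0)‖ * ‖(G.submatrix (r ∘ ai.succAbove) (c ∘ b0.succAbove)).det‖ +
          ∑ b ∈ Finset.univ.erase b0,
            ‖G i (c b)‖ * ‖(G.submatrix (r ∘ ai.succAbove) (c ∘ b.succAbove)).det‖ :=
          (Finset.add_sum_erase _ _ (Finset.mem_univ b0)).symm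
      _ ≤ X * Tb a w I J i j + (m + 1) * (Y * Tb a w I J i j) := by
          refine add_le_add key0 ?_
          calc ∑ b ∈ Finset.univ.erase b0,
              ‖G i (c b)‖ * ‖(G.submatrix (r ∘ ai.succAbove) (c ∘ b.succAbove)).det‖
              ≤ (Finset.univ.erase b0).card • (Y * Tb a w I J i j) :=
                Finset.sum_le_card_nsmul _ _ _
                  (fun b hb => key1 b (Finset.ne_of_mem_erase hb))
            _ = (m + 1) * (Y * Tb a w I J i j) := by
                rw [Finset.card_erase_of_mem (Finset.mem_univ _), Finset.card_univ,
                  Fintype.card_fin, nsmul_eq_mul]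
                norm_num
      _ = Lp K (m + 1) * Tb a w I J i j := by
          simp only [Lp, hX, hY]
          push_cast
          ring

/-- **Lemma 3.3.** Given `n ≥ 1` and constants `K, c > 0`, there is a
constant `C > 0` depending only on `n, K, c` such that: for all complex numbers
`z₀, z₁, …, zₙ` with `0 < |z₀| ≤ |z i| ≤ 1`, all index sets `I, J ⊆ {1,…,n}`, and
every `n × n` complex matrix `G` that is `(I × J)` strongly T-bounded with constant
`K` and has `|det G| ≥ c`, the matrix `G` is invertible and `G⁻¹` is `(I × J)`
strongly T-bounded with constant `C`. -/
theorem stmt_9 (n : ℕ) (hn : 1 ≤ n) (K c : ℝ) (hK : 0 < K) (hc : 0 < c) :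
    ∃ C : ℝ, 0 < C ∧
      ∀ (z₀ : ℂ) (z : Fin n → ℂ) (I J : Finset (Fin n))
        (G : Matrix (Fin n) (Fin n) ℂ),
        0 < ‖z₀‖ → (∀ i, ‖z₀‖ ≤ ‖z i‖) → (∀ i, ‖z i‖ ≤ 1) →
        (∀ i j, (i ∈ I ∧ j ∈ J) →
          ‖G i j‖ ≤ K * ((if i = j then (1 : ℝ) else 0) + ‖z i‖ * ‖z j‖ +
            ‖z₀‖ ^ 2 / (‖z i‖ * ‖z j‖))) →
        (∀ i j, ¬(i ∈ I ∧ j ∈ J) →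
          ‖G i j‖ ≤ K * ((if i = j then (1 : ℝ) else 0) + ‖z i‖ * ‖z j‖)) →
        c ≤ ‖G.det‖ →
        IsUnit G.det ∧
          (∀ i j, (i ∈ I ∧ j ∈ J) →
            ‖G⁻¹ i j‖ ≤ C * ((if i = j then (1 : ℝ) else 0) + ‖z i‖ * ‖z j‖ +
              ‖z₀‖ ^ 2 / (‖z i‖ * ‖z j‖))) ∧
          (∀ i j, ¬(i ∈ I ∧ j ∈ J) →
            ‖G⁻¹ i j‖ ≤ C * ((if i = j then (1 : ℝ) else 0) + ‖z i‖ * ‖z j‖)) := by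
  obtain ⟨m0, rfl⟩ : ∃ m0, n = m0 + 1 := ⟨n - 1, (Nat.succ_pred_eq_of_pos hn).symm⟩
  have hLfac : (0:ℝ) < m0.factorial * (3 * K) ^ m0 := by positivity
  have hLp := Lp_pos hK (m0 - 1)
  set L : ℝ := m0.factorial * (3 * K) ^ m0 + Lp K (m0 - 1) with hLdef
  have hL : 0 < L := by positivity
  refine ⟨L / c, by positivity, ?_⟩
  intro z₀ z I J G ha0 hw1' hw2' hIJ hnIJ hdet
  set a : ℝ := ‖z₀‖ with ha_def
  set w : Fin (m0 + 1) → ℝ := fun i => ‖z i‖ with hw_def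
  have hw1 : ∀ i, a ≤ w i := hw1'
  have hw2 : ∀ i, w i ≤ 1 := hw2'
  have hwpos : ∀ i, 0 < w i := fun i => lt_of_lt_of_le ha0 (hw1 i)
  -- combined entry bound
  have hG : ∀ p q, p ≠ q → ‖G p q‖ ≤ K * Tb a w I J p q := by
    intro p q hpq
    unfold Tb
    by_cases h : p ∈ I ∧ q ∈ J
    · rw [if_pos h]
      have h2 := hIJ p q h
      rw [if_neg hpq, zero_add] at h2
      exact h2
    · rw [if_neg h, add_zero]
      have h2 := hnIJ p q h
      rw [if_neg hpq, zero_add] at h2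
      exact h2
  have hG3 : ∀ p q, ‖G p q‖ ≤ 3 * K := by
    intro p q
    have hwp := hwpos p
    have hwq := hwpos q
    have hx : w p * w q ≤ 1 := by nlinarith [hw2 p, hw2 q]
    have hy : a ^ 2 / (w p * w q) ≤ 1 := by
      rw [div_le_one (by positivity)]
      nlinarith [hw1 p, hw1 q]
    have hite : (if p = q then (1:ℝ) else 0) ≤ 1 := by split <;> norm_num
    by_cases h : p ∈ I ∧ q ∈ J
    · calc ‖G p q‖ ≤ K * ((if p = q then (1:ℝ) else 0) + w p * w q + a ^ 2 / (w p * w q)) :=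
            hIJ p q h
        _ ≤ K * 3 := mul_le_mul_of_nonneg_left (by linarith) hK.le
        _ = 3 * K := by ring
    · calc ‖G p q‖ ≤ K * ((if p = q then (1:ℝ) else 0) + w p * w q) := hnIJ p q h
        _ ≤ K * 3 := mul_le_mul_of_nonneg_left (by linarith) hK.le
        _ = 3 * K := by ring
  have hd0 : G.det ≠ 0 := by
    intro h
    rw [h, norm_zero] at hdet
    linarith
  have hdinv : ‖G.det‖⁻¹ ≤ c⁻¹ := by
    apply inv_anti₀ hc hdet
  refine ⟨isUnit_iff_ne_zero.mpr hd0, ?_⟩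
  -- norm of inverse entries
  have hinv : ∀ p q : Fin (m0 + 1),
      ‖G⁻¹ p q‖ = ‖G.det‖⁻¹ * ‖(G.submatrix q.succAbove p.succAbove).det‖ := by
    intro p q
    rw [Matrix.inv_def, Matrix.smul_apply, Ring.inverse_eq_inv, smul_eq_mul, norm_mul,
      norm_inv, Matrix.adjugate_fin_succ_eq_det_submatrix, norm_mul, norm_pow, norm_neg,
      norm_one, one_pow, one_mul]
  -- main entry bound
  have main : ∀ p q : Fin (m0 + 1), p ≠ q →
      ‖G⁻¹ p q‖ ≤ L / c * Tb a w I J p q := by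
    intro p q hpq
    have hm0 : m0 ≠ 0 := by rintro rfl; exact hpq (Subsingleton.elim (α := Fin 1) p q)
    obtain ⟨m1, rfl⟩ : ∃ m1, m0 = m1 + 1 := ⟨m0 - 1, by omega⟩
    simp only [Nat.add_sub_cancel] at hLdef hLp ⊢
    have hmb := minor_bound a w I J K G ha0 hw1 hw2 hK hG hG3 m1
      q.succAbove p.succAbove p q
      Fin.succAbove_right_injective Fin.succAbove_right_injective hpq
      (by rw [Fin.range_succAbove]; simp)
      (by rw [Fin.range_succAbove]; simpa using Ne.symm hpq)
      (by
        rw [Fin.range_succAbove, Fin.range_succAbove]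
        ext x
        by_cases hx : x = p <;> by_cases hx' : x = q <;>
          simp [hx, hx', hpq, Ne.symm hpq] <;> tauto)
    rw [hinv p q]
    have hTpos := Tb_pos a w I J ha0 hw1 p q
    calc ‖G.det‖⁻¹ * ‖(G.submatrix q.succAbove p.succAbove).det‖
        ≤ c⁻¹ * (Lp K m1 * Tb a w I J p q) :=
          mul_le_mul hdinv hmb (norm_nonneg _) (by positivity)
      _ ≤ c⁻¹ * (L * Tb a w I J p q) := by
          apply mul_le_mul_of_nonneg_left _ (by positivity)
          refine mul_le_mul_of_nonneg_right ?_ hTpos.le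
          rw [hLdef]
          have : (0:ℝ) < ((m1+1).factorial : ℝ) * (3 * K) ^ (m1+1) := by positivity
          linarith
      _ = L / c * Tb a w I J p q := by ring
  have diag : ∀ p : Fin (m0 + 1), ‖G⁻¹ p p‖ ≤ L / c := by
    intro p
    rw [hinv p p]
    calc ‖G.det‖⁻¹ * ‖(G.submatrix p.succAbove p.succAbove).det‖
        ≤ c⁻¹ * (m0.factorial * (3 * K) ^ m0) := by
          apply mul_le_mul hdinv (det_norm_le _ _ (by positivity) fun _ _ => hG3 _ _)
            (norm_nonneg _) (by positivity)
      _ ≤ c⁻¹ * L := by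
          apply mul_le_mul_of_nonneg_left _ (by positivity)
          rw [hLdef]; linarith
      _ = L / c := by ring
  constructor
  · intro i j hij
    by_cases hd : i = j
    · subst hd
      rw [if_pos rfl]
      have h1 : (0:ℝ) ≤ w i * w i := by positivity
      have h2 : (0:ℝ) ≤ a ^ 2 / (w i * w i) := by positivity
      calc ‖G⁻¹ i i‖ ≤ L / c := diag i
        _ = L / c * 1 := by ring
        _ ≤ L / c * (1 + w i * w i + a ^ 2 / (w i * w i)) := by
            apply mul_le_mul_of_nonneg_left (by linarith) (by positivity)
    · rw [if_neg hd]
      have := main i j hd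
      rw [Tb, if_pos hij] at this
      calc ‖G⁻¹ i j‖ ≤ L / c * (w i * w j + a ^ 2 / (w i * w j)) := this
        _ = L / c * (0 + w i * w j + a ^ 2 / (w i * w j)) := by ring
  · intro i j hij
    by_cases hd : i = j
    · subst hd
      rw [if_pos rfl]
      have h1 : (0:ℝ) ≤ w i * w i := by positivity
      calc ‖G⁻¹ i i‖ ≤ L / c := diag i
        _ = L / c * 1 := by ring
        _ ≤ L / c * (1 + w i * w i) := by
            apply mul_le_mul_of_nonneg_left (by linarith) (by positivity)
    · rw [if_neg hd]
      have := main i j hd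
      rw [Tb, if_neg hij, add_zero] at this
      calc ‖G⁻¹ i j‖ ≤ L / c * (w i * w j) := this
        _ = L / c * (0 + w i * w j) := by ring
end

section
/- Let n ≥ 1 and let r_0, r_1, …, r_n be positive reals with r_0 ≤ r_i ≤ 1 for all i ∈ {1, …, n}. Let m ≥ 2, let i_1, …, i_m ∈ {1, …, n}, and for each k ∈ {1, …, m−1} let b_k be either r_{i_k}·r_{i_{k+1}} (type 1) or r_0^2/(r_{i_k}·r_{i_{k+1}}) (type 2). If at least one factor b_k is of type 1, then ∏_{k=1}^{m−1} b_k ≤ r_{i_1}·r_{i_m}. -/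
set_option maxHeartbeats 1000000 in
lemma stmt_11_aux (n : ℕ) (r₀ : ℝ) (r : Fin n → ℝ)
    (hr₀ : 0 < r₀) (hr : ∀ i, r₀ ≤ r i) (hr1 : ∀ i, r i ≤ 1)
    (idx : ℕ → Fin n) (b : ℕ → ℝ) :
    ∀ t, 1 ≤ t →
      (∀ k < t, b k = r (idx k) * r (idx (k + 1)) ∨
        b k = r₀ ^ 2 / (r (idx k) * r (idx (k + 1)))) →
      ((∃ k < t, b k = r (idx k) * r (idx (k + 1))) →
        ∏ k ∈ Finset.range t, b k ≤ r (idx 0) * r (idx t)) ∧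
      ((∀ k < t, b k = r₀ ^ 2 / (r (idx k) * r (idx (k + 1)))) →
        ∏ k ∈ Finset.range t, b k ≤ r₀ ^ 2 / (r (idx 0) * r (idx t))) := by
  have hrpos : ∀ i, (0:ℝ) < r i := fun i => lt_of_lt_of_le hr₀ (hr i)
  intro t
  induction t with
  | zero => intro h; omega
  | succ t ih =>
    intro _ hb
    rcases Nat.eq_or_lt_of_le (Nat.one_le_iff_ne_zero.mpr (Nat.succ_ne_zero t)) with h1 | h1
    · -- t + 1 = 1
      have ht0 : t = 0 := by omega
      subst ht0
      rw [Finset.prod_range_one]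
      constructor
      · rintro ⟨k, hk, hk1⟩
        have hk0 : k = 0 := by omega
        subst hk0
        rw [hk1]
      · intro hall
        rw [hall 0 (by omega)]
    · have ht1 : 1 ≤ t := by omega
      have ihs := ih ht1 (fun k hk => hb k (by omega))
      have hsplit : ∏ k ∈ Finset.range (t + 1), b k
          = (∏ k ∈ Finset.range t, b k) * b t := Finset.prod_range_succ b t
      set A := r (idx 0) with hA
      set B := r (idx t) with hB
      set C := r (idx (t + 1)) with hC
      have hApos : 0 < A := hrpos _
      have hBpos : 0 < B := hrpos _
      have hCpos : 0 < C := hrpos _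
      have hA1 : A ≤ 1 := hr1 _
      have hB1 : B ≤ 1 := hr1 _
      have hC1 : C ≤ 1 := hr1 _
      have hAr : r₀ ≤ A := hr _
      have hBr : r₀ ≤ B := hr _
      have hCr : r₀ ≤ C := hr _
      have hPpos : 0 < ∏ k ∈ Finset.range t, b k := by
        apply Finset.prod_pos
        intro k hk
        rw [Finset.mem_range] at hk
        rcases hb k (by omega) with h | h <;> rw [h]
        · exact mul_pos (hrpos _) (hrpos _)
        · exact div_pos (by positivity) (mul_pos (hrpos _) (hrpos _))
      constructor
      · rintro ⟨k, hk, hk1⟩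
        rw [hsplit]
        rcases hb t (by omega) with hbt | hbt
        · -- b t = B * C
          by_cases hex : ∃ j < t, b j = r (idx j) * r (idx (j + 1))
          · have hP := ihs.1 hex
            calc (∏ k ∈ Finset.range t, b k) * b t
                ≤ (A * B) * (B * C) := by
                  rw [hbt]
                  exact mul_le_mul_of_nonneg_right hP (by positivity)
              _ ≤ A * C := by
                  have hBB : B * B ≤ 1 := by nlinarith
                  nlinarith [mul_nonneg (mul_pos hApos hCpos).le (sub_nonneg.mpr hBB)]
          · have hall : ∀ j < t, b j = r₀ ^ 2 / (r (idx j) * r (idx (j + 1))) := by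
              intro j hj
              rcases hb j (by omega) with h | h
              · exact absurd ⟨j, hj, h⟩ hex
              · exact h
            have hP := ihs.2 hall
            calc (∏ k ∈ Finset.range t, b k) * b t
                ≤ (r₀ ^ 2 / (A * B)) * (B * C) := by
                  rw [hbt]
                  exact mul_le_mul_of_nonneg_right hP (by positivity)
              _ ≤ A * C := by
                  rw [div_mul_eq_mul_div, div_le_iff₀ (by positivity)]
                  have h2 : r₀ ^ 2 ≤ A * A := by nlinarith
                  nlinarith [mul_nonneg (mul_pos hBpos hCpos).le (sub_nonneg.mpr h2)]
        · -- b t = r₀² / (B * C)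
          by_cases hex : ∃ j < t, b j = r (idx j) * r (idx (j + 1))
          · have hP := ihs.1 hex
            calc (∏ k ∈ Finset.range t, b k) * b t
                ≤ (A * B) * (r₀ ^ 2 / (B * C)) := by
                  rw [hbt]
                  exact mul_le_mul_of_nonneg_right hP (by positivity)
              _ ≤ A * C := by
                  rw [mul_div_assoc', div_le_iff₀ (by positivity)]
                  have h2 : r₀ ^ 2 ≤ C * C := by nlinarith
                  nlinarith [mul_nonneg (mul_pos hApos hBpos).le (sub_nonneg.mpr h2)]
          · -- witness must be k = t, so b t = B * C too
            have hkt : k = t := by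
              rcases Nat.lt_succ_iff_lt_or_eq.mp hk with h | h
              · exact absurd ⟨k, h, hk1⟩ hex
              · exact h
            rw [hkt] at hk1
            have hall : ∀ j < t, b j = r₀ ^ 2 / (r (idx j) * r (idx (j + 1))) := by
              intro j hj
              rcases hb j (by omega) with h | h
              · exact absurd ⟨j, hj, h⟩ hex
              · exact h
            have hP := ihs.2 hall
            calc (∏ k ∈ Finset.range t, b k) * b t
                ≤ (r₀ ^ 2 / (A * B)) * (B * C) := by
                  rw [hk1]
                  exact mul_le_mul_of_nonneg_right hP (by positivity)
              _ ≤ A * C := by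
                  rw [div_mul_eq_mul_div, div_le_iff₀ (by positivity)]
                  have h2 : r₀ ^ 2 ≤ A * A := by nlinarith
                  nlinarith [mul_nonneg (mul_pos hBpos hCpos).le (sub_nonneg.mpr h2)]
      · intro hall
        have hP := ihs.2 (fun j hj => hall j (by omega))
        rw [hsplit, hall t (by omega)]
        calc (∏ k ∈ Finset.range t, b k) * (r₀ ^ 2 / (B * C))
            ≤ (r₀ ^ 2 / (A * B)) * (r₀ ^ 2 / (B * C)) :=
              mul_le_mul_of_nonneg_right hP (by positivity)
          _ ≤ r₀ ^ 2 / (A * C) := by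
              rw [div_mul_div_comm, div_le_div_iff₀ (by positivity) (by positivity)]
              have h2 : r₀ ^ 2 ≤ B * B := by nlinarith
              have h3 := mul_le_mul_of_nonneg_left h2
                (show (0:ℝ) ≤ r₀ ^ 2 * (A * C) by positivity)
              nlinarith [h3]

/-- If `0 < r₀ ≤ r i ≤ 1` for all `i`, and along a chain of indices
`idx 0, …, idx (m−1)` (with `m ≥ 2`) each factor `b k` is either of type 1,
`r (idx k) · r (idx (k+1))`, or of type 2, `r₀² / (r (idx k) · r (idx (k+1)))`, and
at least one factor is of type 1, then
`∏_{k=0}^{m−2} b k ≤ r (idx 0) · r (idx (m−1))`. -/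
theorem stmt_11 (n : ℕ) (hn : 1 ≤ n) (r₀ : ℝ) (r : Fin n → ℝ)
    (hr₀ : 0 < r₀) (hr : ∀ i, r₀ ≤ r i) (hr1 : ∀ i, r i ≤ 1)
    (m : ℕ) (hm : 2 ≤ m) (idx : ℕ → Fin n) (b : ℕ → ℝ)
    (hb : ∀ k < m - 1, b k = r (idx k) * r (idx (k + 1)) ∨
      b k = r₀ ^ 2 / (r (idx k) * r (idx (k + 1))))
    (hone : ∃ k < m - 1, b k = r (idx k) * r (idx (k + 1))) :
    ∏ k ∈ Finset.range (m - 1), b k ≤ r (idx 0) * r (idx (m - 1)) := by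
  have ht : 1 ≤ m - 1 := by omega
  have := (stmt_11_aux n r₀ r hr₀ hr hr1 idx b (m - 1) ht hb).1 hone
  have hEq : m - 1 - 1 + 1 = m - 1 := by omega
  convert this using 3
end

section
/- Let n ≥ 1, k ∈ {1, …, n}, α ∈ (0,1], p > 0, H ≥ 0, and let h : ℝ^n → ℝ be twice continuously differentiable with h(x + p·e_k) = h(x) for all x ∈ ℝ^n (periodicity with period p in the k-th coordinate, with e_k the k-th standard basis vector). Suppose that |∂_k^2 h(x + s·e_k) − ∂_k^2 h(x)| ≤ H·|s|^α for all x ∈ ℝ^n and s ∈ ℝ. Then |∂_k h(x)| ≤ p^{1+α}·H for all x ∈ ℝ^n. (Here ∂_k denotes the partial derivative in the k-th coordinate.) -/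
/-!
Restricted to the line `t ↦ x + t • e_k`, `h` becomes a `p`-periodic function `g` of one variable.
By Rolle's theorem both `g'` and `g''` vanish somewhere in each period. The Hölder condition,
anchored at the zero of `g''`, bounds `|g''|` by `H p^α` on a period, and the mean value theorem,
anchored at the zero of `g'`, then bounds `|g'|` by `H p^α · p`.
-/

/-- The second partial derivative `∂_j ∂_k h` of `h : ℝⁿ → ℝ`, expressed via
Fréchet derivatives applied to the standard basis vectors. -/
noncomputable def secondPartial (n : ℕ) (h : (Fin n → ℝ) → ℝ) (j k : Fin n)
    (x : Fin n → ℝ) : ℝ :=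
  fderiv ℝ (fun y => fderiv ℝ h y (Pi.single k 1)) x (Pi.single j 1)

open Set Function

theorem Function.Periodic.periodic_of_hasDerivAt {𝕜 F : Type*} [NontriviallyNormedField 𝕜]
    [NormedAddCommGroup F] [NormedSpace 𝕜 F] {f f' : 𝕜 → F} {p : 𝕜}
    (hper : Periodic f p) (hf : ∀ t, HasDerivAt f (f' t) t) : Periodic f' p := by
  intro t
  rw [← (hf (t + p)).deriv, ← (hf t).deriv, ← deriv_comp_add_const, funext hper]

theorem Function.Periodic.exists_hasDerivAt_eq_zero {f f' : ℝ → ℝ} {p : ℝ}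
    (hper : Periodic f p) (hp : 0 < p) (hf : ∀ t, HasDerivAt f (f' t) t) (a : ℝ) :
    ∃ c ∈ Ioo a (a + p), f' c = 0 :=
  _root_.exists_hasDerivAt_eq_zero (lt_add_of_pos_right a hp)
    (fun t _ => (hf t).continuousAt.continuousWithinAt) (hper a).symm (fun t _ => hf t)

theorem norm_le_of_holder_of_eq_zero {F : Type*} [NormedAddCommGroup F] {f : ℝ → F}
    {α H a b c : ℝ} (hα : 0 ≤ α) (hH : 0 ≤ H)
    (hHolder : ∀ t s, ‖f (t + s) - f t‖ ≤ H * |s| ^ α) (hc : c ∈ Icc a b) (hfc : f c = 0) :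
    ∀ t ∈ Icc a b, ‖f t‖ ≤ H * (b - a) ^ α := by
  intro t ht
  have hdist : |t - c| ≤ b - a := abs_sub_le_of_le_of_le ht.1 ht.2 hc.1 hc.2
  calc ‖f t‖ = ‖f (c + (t - c)) - f c‖ := by rw [hfc, sub_zero, add_sub_cancel]
    _ ≤ H * |t - c| ^ α := hHolder c (t - c)
    _ ≤ H * (b - a) ^ α := by gcongr

theorem norm_le_of_hasDerivAt_of_eq_zero {F : Type*} [NormedAddCommGroup F] [NormedSpace ℝ F]
    {f f' : ℝ → F} {M a b c : ℝ} (hf : ∀ t ∈ Icc a b, HasDerivAt f (f' t) t)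
    (hbound : ∀ t ∈ Icc a b, ‖f' t‖ ≤ M) (hc : c ∈ Icc a b) (hfc : f c = 0) :
    ∀ t ∈ Icc a b, ‖f t‖ ≤ M * (b - a) := by
  intro t ht
  have hM : 0 ≤ M := (norm_nonneg _).trans (hbound c hc)
  have hdist : |t - c| ≤ b - a := abs_sub_le_of_le_of_le ht.1 ht.2 hc.1 hc.2
  calc ‖f t‖ = ‖f t - f c‖ := by rw [hfc, sub_zero]
    _ ≤ M * ‖t - c‖ := (convex_Icc a b).norm_image_sub_le_of_norm_hasDerivWithin_le
        (fun s hs => (hf s hs).hasDerivWithinAt) hbound hc ht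
    _ ≤ M * (b - a) := by rw [Real.norm_eq_abs]; gcongr

theorem Function.Periodic.abs_deriv_le_of_holder {g g' g'' : ℝ → ℝ} {p α H : ℝ}
    (hper : Periodic g p) (hp : 0 < p) (hα : 0 ≤ α) (hH : 0 ≤ H)
    (hg : ∀ t, HasDerivAt g (g' t) t) (hg' : ∀ t, HasDerivAt g' (g'' t) t)
    (hHolder : ∀ t s, |g'' (t + s) - g'' t| ≤ H * |s| ^ α) (a : ℝ) :
    |g' a| ≤ p ^ (1 + α) * H := by
  obtain ⟨t₁, ht₁, hg''t₁⟩ := (hper.periodic_of_hasDerivAt hg).exists_hasDerivAt_eq_zero hp hg' a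
  obtain ⟨t₀, ht₀, hg't₀⟩ := hper.exists_hasDerivAt_eq_zero hp hg a
  have hg''_bound : ∀ t ∈ Icc a (a + p), ‖g'' t‖ ≤ H * (a + p - a) ^ α :=
    norm_le_of_holder_of_eq_zero hα hH hHolder (Ioo_subset_Icc_self ht₁) hg''t₁
  have hg'_bound := norm_le_of_hasDerivAt_of_eq_zero (fun t _ => hg' t) hg''_bound
    (Ioo_subset_Icc_self ht₀) hg't₀ a (left_mem_Icc.2 (le_add_of_nonneg_right hp.le))
  calc |g' a| ≤ H * p ^ α * p := by
        simpa only [add_sub_cancel_left, Real.norm_eq_abs] using hg'_bound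
    _ = p ^ (1 + α) * H := by rw [Real.rpow_add hp, Real.rpow_one]; ring

theorem DifferentiableAt.hasDerivAt_comp_add_smul {E F : Type*} [NormedAddCommGroup E]
    [NormedSpace ℝ E] [NormedAddCommGroup F] [NormedSpace ℝ F] {f : E → F} {x v : E} {t : ℝ}
    (hf : DifferentiableAt ℝ f (x + t • v)) :
    HasDerivAt (fun s : ℝ => f (x + s • v)) (fderiv ℝ f (x + t • v) v) t := by
  have hline : HasDerivAt (fun s : ℝ => x + s • v) v t := by
    simpa using ((hasDerivAt_id t).smul_const v).const_add x
  exact hf.hasFDerivAt.comp_hasDerivAt t hline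

theorem stmt_12_general (n : ℕ) (k : Fin n) (α p H : ℝ)
    (hα : 0 < α) (hp : 0 < p) (hH : 0 ≤ H)
    (h : (Fin n → ℝ) → ℝ) (hh : ContDiff ℝ 2 h)
    (hper : ∀ x : Fin n → ℝ, h (x + p • (Pi.single k 1 : Fin n → ℝ)) = h x)
    (hHolder : ∀ (x : Fin n → ℝ) (s : ℝ),
      |secondPartial n h k k (x + s • (Pi.single k 1 : Fin n → ℝ)) - secondPartial n h k k x| ≤
        H * |s| ^ α) :
    ∀ x : Fin n → ℝ, |fderiv ℝ h x (Pi.single k 1)| ≤ p ^ (1 + α) * H := by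
  intro x
  set e : Fin n → ℝ := Pi.single k 1
  have hshift : ∀ t s : ℝ, x + (t + s) • e = x + t • e + s • e := fun t s => by
    rw [add_smul, add_assoc]
  have hdiff : Differentiable ℝ h := hh.differentiable (by norm_num)
  have hdiff' : Differentiable ℝ (fun y => fderiv ℝ h y e) :=
    ((hh.fderiv_right (le_refl _)).clm_apply contDiff_const).differentiable one_ne_zero
  simpa using Periodic.abs_deriv_le_of_holder (g := fun t => h (x + t • e))
    (g'' := fun t => secondPartial n h k k (x + t • e)) (a := 0)
    (fun t => by simp only [hshift, hper]) hp hα.le hH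
    (fun t => (hdiff _).hasDerivAt_comp_add_smul) (fun t => (hdiff' _).hasDerivAt_comp_add_smul)
    (fun t s => by simpa only [hshift] using hHolder (x + t • e) s)

/-- Let `h : ℝⁿ → ℝ` be `C²`, periodic with period `p > 0` in the
`k`-th coordinate, and suppose the second partial `∂_k² h` satisfies the directional
Hölder estimate `|∂_k² h(x + s·e_k) − ∂_k² h(x)| ≤ H·|s|^α` for all `x, s`. Then
`|∂_k h(x)| ≤ p^{1+α}·H` for all `x`. -/
theorem stmt_12 (n : ℕ) (hn : 1 ≤ n) (k : Fin n) (α p H : ℝ)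
    (hα : 0 < α) (hα1 : α ≤ 1) (hp : 0 < p) (hH : 0 ≤ H)
    (h : (Fin n → ℝ) → ℝ) (hh : ContDiff ℝ 2 h)
    (hper : ∀ x : Fin n → ℝ, h (x + p • (Pi.single k 1 : Fin n → ℝ)) = h x)
    (hHolder : ∀ (x : Fin n → ℝ) (s : ℝ),
      |secondPartial n h k k (x + s • (Pi.single k 1 : Fin n → ℝ)) - secondPartial n h k k x| ≤
        H * |s| ^ α) :
    ∀ x : Fin n → ℝ, |fderiv ℝ h x (Pi.single k 1)| ≤ p ^ (1 + α) * H :=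
  stmt_12_general n k α p H hα hp hH h hh hper hHolder
end

section
/- Let n ≥ 1, j, k ∈ {1, …, n}, α ∈ (0,1], p_j, p_k > 0, H ≥ 0, and let h : ℝ^n → ℝ be twice continuously differentiable with h(x + p_j·e_j) = h(x) and h(x + p_k·e_k) = h(x) for all x ∈ ℝ^n. Suppose that |∂_j∂_k h(x + s·e_j) − ∂_j∂_k h(x)| ≤ H·|s|^α and |∂_j∂_k h(x + s·e_k) − ∂_j∂_k h(x)| ≤ H·|s|^α for all x ∈ ℝ^n and s ∈ ℝ. Then |∂_j∂_k h(x)| ≤ min(p_j, p_k)^α·H for all x ∈ ℝ^n. -/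
open Set

variable {E F : Type*} [NormedAddCommGroup E] [NormedSpace ℝ E]
  [NormedAddCommGroup F] [NormedSpace ℝ F]

theorem fderiv_add_eq_of_periodic {f : E → F} {c : E} (hf : ∀ x, f (x + c) = f x) (x : E) :
    fderiv ℝ f (x + c) = fderiv ℝ f x := by
  rw [← fderiv_comp_add_right]
  simp only [hf]

theorem fderiv_fderiv_apply_eq {f : E → F} {x : E} (hf : DifferentiableAt ℝ (fderiv ℝ f) x)
    (v w : E) : fderiv ℝ (fun y => fderiv ℝ f y v) x w = fderiv ℝ (fderiv ℝ f) x w v := by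
  rw [fderiv_clm_apply hf (differentiableAt_const v)]
  simp

theorem ContDiff.fderiv_partial_comm {f : E → F} (hf : ContDiff ℝ 2 f) (x v w : E) :
    fderiv ℝ (fun y => fderiv ℝ f y v) x w = fderiv ℝ (fun y => fderiv ℝ f y w) x v := by
  have hdiff : DifferentiableAt ℝ (fderiv ℝ f) x :=
    (hf.fderiv_right (m := 1) le_rfl).differentiable one_ne_zero x
  rw [fderiv_fderiv_apply_eq hdiff, fderiv_fderiv_apply_eq hdiff]
  exact hf.contDiffAt.isSymmSndFDerivAt (by simp) w v

theorem exists_mem_Ioo_fderiv_partial_eq_zero_of_periodic {f : E → ℝ} {v w : E} {p : ℝ}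
    (hp : 0 < p) (hf : Differentiable ℝ fun y => fderiv ℝ f y v)
    (hper : ∀ x, f (x + p • w) = f x) (x : E) :
    ∃ c ∈ Ioo 0 p, fderiv ℝ (fun y => fderiv ℝ f y v) (x + c • w) w = 0 := by
  have hline (s : ℝ) : HasDerivAt (fun s : ℝ => x + s • w) w s := by
    simpa using ((hasDerivAt_id s).smul_const w).const_add x
  have hderiv (s : ℝ) : HasDerivAt (fun s => fderiv ℝ f (x + s • w) v)
      (fderiv ℝ (fun y => fderiv ℝ f y v) (x + s • w) w) s :=
    (hf _).hasFDerivAt.comp_hasDerivAt s (hline s)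
  have hends : fderiv ℝ f (x + (0 : ℝ) • w) v = fderiv ℝ f (x + p • w) v := by
    rw [zero_smul, add_zero, fderiv_add_eq_of_periodic hper]
  exact exists_hasDerivAt_eq_zero hp (fun s _ => (hderiv s).continuousAt.continuousWithinAt)
    hends (fun s _ => hderiv s)

theorem abs_fderiv_partial_le_of_periodic_of_holder {f : E → ℝ} {v w x : E} {α p H : ℝ}
    (hα : 0 ≤ α) (hp : 0 < p) (hH : 0 ≤ H) (hf : Differentiable ℝ fun y => fderiv ℝ f y v)
    (hper : ∀ x, f (x + p • w) = f x)
    (hHol : ∀ s : ℝ, |fderiv ℝ (fun y => fderiv ℝ f y v) (x + s • w) w -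
      fderiv ℝ (fun y => fderiv ℝ f y v) x w| ≤ H * |s| ^ α) :
    |fderiv ℝ (fun y => fderiv ℝ f y v) x w| ≤ p ^ α * H := by
  obtain ⟨c, ⟨hc0, hcp⟩, hzero⟩ := exists_mem_Ioo_fderiv_partial_eq_zero_of_periodic hp hf hper x
  calc |fderiv ℝ (fun y => fderiv ℝ f y v) x w|
      = |fderiv ℝ (fun y => fderiv ℝ f y v) (x + c • w) w -
          fderiv ℝ (fun y => fderiv ℝ f y v) x w| := by rw [hzero, zero_sub, abs_neg]
    _ ≤ H * |c| ^ α := hHol c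
    _ ≤ H * p ^ α := by rw [abs_of_pos hc0]; gcongr
    _ = p ^ α * H := mul_comm _ _

theorem stmt_13_general (n : ℕ) (j k : Fin n) (α pj pk H : ℝ)
    (hα : 0 < α) (hpj : 0 < pj) (hpk : 0 < pk) (hH : 0 ≤ H)
    (h : (Fin n → ℝ) → ℝ) (hh : ContDiff ℝ 2 h)
    (hperj : ∀ x : Fin n → ℝ, h (x + pj • (Pi.single j 1 : Fin n → ℝ)) = h x)
    (hperk : ∀ x : Fin n → ℝ, h (x + pk • (Pi.single k 1 : Fin n → ℝ)) = h x)
    (hHj : ∀ (x : Fin n → ℝ) (s : ℝ),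
      |secondPartial n h j k (x + s • (Pi.single j 1 : Fin n → ℝ)) - secondPartial n h j k x| ≤
        H * |s| ^ α)
    (hHk : ∀ (x : Fin n → ℝ) (s : ℝ),
      |secondPartial n h j k (x + s • (Pi.single k 1 : Fin n → ℝ)) - secondPartial n h j k x| ≤
        H * |s| ^ α) :
    ∀ x : Fin n → ℝ, |secondPartial n h j k x| ≤ min pj pk ^ α * H := by
  intro x
  have hdiff (v : Fin n → ℝ) : Differentiable ℝ fun y => fderiv ℝ h y v :=
    ((hh.fderiv_right (m := 1) le_rfl).differentiable one_ne_zero).clm_apply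
      (differentiable_const v)
  have hcomm : secondPartial n h j k =
      fun y => fderiv ℝ (fun z => fderiv ℝ h z (Pi.single j 1)) y (Pi.single k 1) :=
    funext fun y => hh.fderiv_partial_comm y _ _
  rcases le_total pj pk with hle | hle
  · rw [min_eq_left hle]
    exact abs_fderiv_partial_le_of_periodic_of_holder hα.le hpj hH (hdiff _) hperj (hHj x)
  · rw [min_eq_right hle]
    rw [hcomm] at hHk ⊢
    exact abs_fderiv_partial_le_of_periodic_of_holder hα.le hpk hH (hdiff _) hperk (hHk x)

/-- Let `h : ℝⁿ → ℝ` be `C²`, periodic with period `pj > 0` in the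
`j`-th coordinate and `pk > 0` in the `k`-th coordinate, and suppose the mixed second
partial `∂_j ∂_k h` satisfies the directional Hölder estimates
`|∂_j∂_k h(x + s·e_j) − ∂_j∂_k h(x)| ≤ H·|s|^α` and
`|∂_j∂_k h(x + s·e_k) − ∂_j∂_k h(x)| ≤ H·|s|^α` for all `x, s`. Then
`|∂_j∂_k h(x)| ≤ min(pj, pk)^α · H` for all `x`. -/
theorem stmt_13 (n : ℕ) (hn : 1 ≤ n) (j k : Fin n) (α pj pk H : ℝ)
    (hα : 0 < α) (hα1 : α ≤ 1) (hpj : 0 < pj) (hpk : 0 < pk) (hH : 0 ≤ H)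
    (h : (Fin n → ℝ) → ℝ) (hh : ContDiff ℝ 2 h)
    (hperj : ∀ x : Fin n → ℝ, h (x + pj • (Pi.single j 1 : Fin n → ℝ)) = h x)
    (hperk : ∀ x : Fin n → ℝ, h (x + pk • (Pi.single k 1 : Fin n → ℝ)) = h x)
    (hHj : ∀ (x : Fin n → ℝ) (s : ℝ),
      |secondPartial n h j k (x + s • (Pi.single j 1 : Fin n → ℝ)) - secondPartial n h j k x| ≤
        H * |s| ^ α)
    (hHk : ∀ (x : Fin n → ℝ) (s : ℝ),
      |secondPartial n h j k (x + s • (Pi.single k 1 : Fin n → ℝ)) - secondPartial n h j k x| ≤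
        H * |s| ^ α) :
    ∀ x : Fin n → ℝ, |secondPartial n h j k x| ≤ min pj pk ^ α * H :=
  stmt_13_general n j k α pj pk H hα hpj hpk hH h hh hperj hperk hHj hHk
end
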